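/- arXiv:2409.07719 — 2 statements merged into one kernel-verified Lean document; each statement's English description precedes it below -/
import Mathlib

section
/- Fix a constant c > 0. For each integer k ≥ 2 with k − ⌈√(c·k·log k)⌉ ≥ 1, set r = k − ⌈√(c·k·log k)⌉ and let p_k = 2^{−(r+k−1)}·Σ_{m=0}^{k−1} C(r+k−1, m) be the probability that a Binomial(r+k−1, 1/2) random variable is at most k−1. Then 1 − p_k = Θ(k^{−c/4}/√(log k)); that is, there exist constants 0 < A ≤ B and an integer k_0 such that for all k ≥ k_0, A·k^{−c/4}/√(log k) ≤ 1 − p_k ≤ B·k^{−c/4}/√(log k). Here log denotes the natural logarithm. -/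
/-!
With `d = ⌈√(c k log k)⌉ + 1` there are `n = 2k - d` trials, and `1 - p_k` is the upper tail
`2⁻ⁿ ∑_{m ≥ k} C(n, m)`. Stirling's formula together with `log (1 + x) = x - x²/2 + O(x³)` gives
`C(n, k) / 2ⁿ ≍ k^{-1/2} exp (-d² / 4k)` as long as `d³ ≤ k²`. Comparing the tail with geometric
series in the ratio `C(n, m + 1) / C(n, m) = (n - m) / (m + 1)` shows that it is `≍ k / d` times
its first term when `√k ≤ d ≤ k / 8`. Hence `1 - p_k ≍ (√k / d) exp (-d² / 4k)`, and for
`d ≈ √(c k log k)` this is `≍ k^{-c/4} / √(log k)`.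
-/

open Finset Real Filter

lemma abs_log_one_add_sub_le {x : ℝ} (hx : |x| ≤ 1 / 2) :
    |log (1 + x) - (x - x ^ 2 / 2)| ≤ 2 * |x| ^ 3 := by
  have h := abs_log_sub_add_sum_range_le (x := -x) (by rw [abs_neg]; linarith) 2
  rw [abs_neg, sub_neg_eq_add] at h
  calc |log (1 + x) - (x - x ^ 2 / 2)|
      = |(∑ i ∈ range 2, (-x) ^ (i + 1) / (i + 1)) + log (1 + x)| := by
        congr 1; norm_num [sum_range_succ]; ring
    _ ≤ |x| ^ 3 / (1 - |x|) := h
    _ ≤ 2 * |x| ^ 3 := by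
        rw [div_le_iff₀ (by linarith)]
        nlinarith [pow_nonneg (abs_nonneg x) 3]

open Stirling in
lemma abs_log_stirlingSeq_le_one {n : ℕ} (hn : n ≠ 0) : |log (stirlingSeq n)| ≤ 1 := by
  obtain ⟨m, rfl⟩ := Nat.exists_eq_succ_of_ne_zero hn
  have hlow : 1 ≤ stirlingSeq (m + 1) :=
    (one_le_sqrt.2 (by linarith [pi_gt_three])).trans (sqrt_pi_le_stirlingSeq hn)
  have hup : stirlingSeq (m + 1) ≤ exp 1 := by
    calc stirlingSeq (m + 1) ≤ stirlingSeq 1 := stirlingSeq'_antitone (Nat.zero_le m)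
      _ = exp 1 / √2 := stirlingSeq_one
      _ ≤ exp 1 := div_le_self (exp_pos 1).le (one_le_sqrt.2 one_le_two)
  rw [abs_le]
  constructor
  · linarith [log_nonneg hlow]
  · simpa using log_le_log (by linarith) hup

-- `(a + b)` times the Kullback–Leibler divergence of `(a, b) / (a + b)` from `(1/2, 1/2)`.
noncomputable def divergenceFromHalf (a b : ℝ) : ℝ :=
  a * log (2 * a / (a + b)) + b * log (2 * b / (a + b))

open Stirling in
lemma log_add_choose_div_two_pow {a b : ℕ} (ha : a ≠ 0) (hb : b ≠ 0) :
    log ((a + b).choose a / 2 ^ (a + b) : ℝ) =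
      log (stirlingSeq (a + b)) - log (stirlingSeq a) - log (stirlingSeq b)
        + log ((a + b) / (2 * a * b)) / 2
        - divergenceFromHalf a b := by
  have ha' : (a : ℝ) ≠ 0 := Nat.cast_ne_zero.2 ha
  have hb' : (b : ℝ) ≠ 0 := Nat.cast_ne_zero.2 hb
  have hab : (a : ℝ) + b ≠ 0 := by positivity
  simp only [divergenceFromHalf, log_stirlingSeq_formula, Nat.cast_add_choose, Nat.cast_add]
  rw [log_div (by positivity) (by positivity), log_div (by positivity) (by positivity),
    log_mul (by positivity) (by positivity)]
  simp only [log_div, log_mul, log_pow, log_exp, ha', hb', hab, two_ne_zero, ne_eq,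
    not_false_eq_true, exp_ne_zero, mul_ne_zero_iff, and_self]
  push_cast
  ring

lemma abs_divergenceFromHalf_sub_le {a b : ℝ} (ha : 0 < a) (hb : 0 < b)
    (hab : |a - b| ≤ (a + b) / 2) :
    |divergenceFromHalf a b - (a - b) ^ 2 / (2 * (a + b))| ≤ 2 * |a - b| ^ 3 / (a + b) ^ 2 := by
  set x := (a - b) / (a + b)
  have hN : 0 < a + b := by positivity
  have hx : |x| ≤ 1 / 2 := by
    rw [abs_div, abs_of_pos hN, div_le_iff₀ hN]; linarith
  have hx' : |-x| ≤ 1 / 2 := by rwa [abs_neg]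
  have hsplit : divergenceFromHalf a b - (a - b) ^ 2 / (2 * (a + b)) =
      a * (log (1 + x) - (x - x ^ 2 / 2)) + b * (log (1 + -x) - (-x - (-x) ^ 2 / 2)) := by
    have h1 : 2 * a / (a + b) = 1 + x := by simp only [x]; field_simp; ring
    have h2 : 2 * b / (a + b) = 1 + -x := by simp only [x]; field_simp; ring
    rw [divergenceFromHalf, h1, h2]
    simp only [x]
    field_simp
    ring
  rw [hsplit]
  calc _ ≤ a * (2 * |x| ^ 3) + b * (2 * |-x| ^ 3) := by
        refine (abs_add_le _ _).trans (add_le_add ?_ ?_)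
        · rw [abs_mul, abs_of_pos ha]
          exact mul_le_mul_of_nonneg_left (abs_log_one_add_sub_le hx) ha.le
        · rw [abs_mul, abs_of_pos hb]
          exact mul_le_mul_of_nonneg_left (abs_log_one_add_sub_le hx') hb.le
    _ = 2 * |a - b| ^ 3 / (a + b) ^ 2 := by
        rw [abs_neg, abs_div, abs_of_pos hN]; field_simp

lemma abs_log_add_choose_div_two_pow_sub_le {a b : ℕ} (ha : a ≠ 0) (hb : b ≠ 0)
    (hab : |(a : ℝ) - b| ≤ (a + b) / 2) :
    |log ((a + b).choose a / 2 ^ (a + b) : ℝ) -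
        (log ((a + b) / (2 * a * b)) / 2 - (a - b) ^ 2 / (2 * (a + b)))| ≤
      3 + 2 * |(a : ℝ) - b| ^ 3 / (a + b) ^ 2 := by
  have hN := abs_log_stirlingSeq_le_one (n := a + b) (by omega)
  have ha' := abs_log_stirlingSeq_le_one ha
  have hb' := abs_log_stirlingSeq_le_one hb
  have hD := abs_divergenceFromHalf_sub_le (by positivity) (by positivity) hab
  rw [log_add_choose_div_two_pow ha hb]
  rw [abs_le] at *
  constructor <;> linarith

lemma choose_succ_eq_mul_div (n m : ℕ) :
    (n.choose (m + 1) : ℝ) = n.choose m * ((n - m : ℕ) / (m + 1)) := by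
  rw [mul_div_assoc', eq_div_iff (by positivity)]
  exact_mod_cast Nat.choose_succ_right_eq n m

lemma sum_Ico_choose_le {n k : ℕ} (hkn : k ≤ n) (hnk : n ≤ 2 * k) :
    ∑ m ∈ Ico k (n + 1), (n.choose m : ℝ) ≤ n.choose k * ((k + 1) / (2 * k + 1 - n)) := by
  set ρ : ℝ := (n - k : ℕ) / (k + 1)
  have hρ0 : 0 ≤ ρ := by positivity
  have hρ1 : ρ < 1 := by
    rw [div_lt_one (by positivity), Nat.cast_sub hkn]
    have : (n : ℝ) ≤ 2 * k := by exact_mod_cast hnk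
    linarith
  have hterm (j : ℕ) : (n.choose (k + j) : ℝ) ≤ ρ ^ j * n.choose k :=
    le_geom (u := fun j ↦ (n.choose (k + j) : ℝ)) hρ0 j fun i _ ↦ by
      rw [← add_assoc, choose_succ_eq_mul_div, mul_comm]
      gcongr
      exact div_le_div₀ (by positivity) (by exact_mod_cast (by omega)) (by positivity)
        (by push_cast; linarith)
  calc ∑ m ∈ Ico k (n + 1), (n.choose m : ℝ)
      = ∑ j ∈ range (n + 1 - k), (n.choose (k + j) : ℝ) := sum_Ico_eq_sum_range _ _ _
    _ ≤ ∑ j ∈ range (n + 1 - k), ρ ^ j * n.choose k := sum_le_sum fun j _ ↦ hterm j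
    _ = n.choose k * ∑ j ∈ Ico 0 (n + 1 - k), ρ ^ j := by rw [← sum_mul, mul_comm, range_eq_Ico]
    _ ≤ n.choose k * (ρ ^ 0 / (1 - ρ)) := by gcongr; exact geom_sum_Ico_le_of_lt_one hρ0 hρ1
    _ = n.choose k * ((k + 1) / (2 * k + 1 - n)) := by
        congr 1
        rw [pow_zero, one_sub_div (by positivity), one_div_div, Nat.cast_sub hkn]
        ring_nf

lemma choose_mul_pow_le_sum_Ico_choose {n k L : ℕ} (hL : k + L ≤ n) (hn : n ≤ 2 * (k + L)) :
    n.choose k * (L * ((n - k - L : ℕ) / (k + L) : ℝ) ^ L) ≤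
      ∑ m ∈ Ico k (n + 1), (n.choose m : ℝ) := by
  set ρ : ℝ := (n - k - L : ℕ) / (k + L)
  have hρ0 : 0 ≤ ρ := by positivity
  have hρ1 : ρ ≤ 1 :=
    div_le_one_of_le₀ (by exact_mod_cast (by omega : n - k - L ≤ k + L)) (by positivity)
  have hterm (j : ℕ) (hj : j ≤ L) : ρ ^ j * n.choose k ≤ n.choose (k + j) :=
    geom_le (u := fun j ↦ (n.choose (k + j) : ℝ)) hρ0 j fun i hi ↦ by
      rw [← add_assoc, choose_succ_eq_mul_div, mul_comm]
      gcongr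
      exact div_le_div₀ (by positivity) (by exact_mod_cast (by omega)) (by positivity)
        (by exact_mod_cast (by omega))
  calc (n.choose k : ℝ) * (L * ρ ^ L) = ∑ j ∈ range L, ρ ^ L * n.choose k := by
        rw [sum_const, card_range, nsmul_eq_mul]; ring
    _ ≤ ∑ j ∈ range L, (n.choose (k + j) : ℝ) := sum_le_sum fun j hj ↦
        (mul_le_mul_of_nonneg_right (pow_le_pow_of_le_one hρ0 hρ1 (mem_range.1 hj).le)
          (by positivity)).trans (hterm j (mem_range.1 hj).le)
    _ = ∑ m ∈ Ico k (k + L), (n.choose m : ℝ) := by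
        rw [sum_Ico_eq_sum_range, Nat.add_sub_cancel_left]
    _ ≤ ∑ m ∈ Ico k (n + 1), (n.choose m : ℝ) :=
        sum_le_sum_of_subset_of_nonneg (Ico_subset_Ico le_rfl (by omega)) fun _ _ _ ↦ by positivity

noncomputable def upperTail (n k : ℕ) : ℝ := (∑ m ∈ Ico k (n + 1), (n.choose m : ℝ)) / 2 ^ n

lemma one_sub_sum_range_choose_div_two_pow {n k : ℕ} (hk : k ≤ n + 1) :
    1 - (∑ m ∈ range k, (n.choose m : ℝ)) / 2 ^ n = upperTail n k := by
  have htotal : ∑ m ∈ range (n + 1), (n.choose m : ℝ) = 2 ^ n := by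
    exact_mod_cast Nat.sum_range_choose n
  rw [upperTail, ← sum_range_add_sum_Ico _ hk] at *
  field_simp
  linarith

lemma sum_Ico_choose_two_mul_sub_le {k d : ℕ} (hd : 0 < d) (hdk : d ≤ k) :
    ∑ m ∈ Ico k (2 * k - d + 1), ((2 * k - d).choose m : ℝ) ≤ (2 * k - d).choose k * (k / d) := by
  refine (sum_Ico_choose_le (by omega) (by omega)).trans
    (mul_le_mul_of_nonneg_left ?_ (by positivity))
  have hd' : (0 : ℝ) < d := by exact_mod_cast hd
  have hdk' : (d : ℝ) ≤ k := by exact_mod_cast hdk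
  rw [Nat.cast_sub (by omega), div_le_div_iff₀ (by push_cast; linarith) hd']
  push_cast
  nlinarith

lemma choose_mul_le_sum_Ico_choose_two_mul_sub {k d : ℕ} (hd : 0 < d) (hdk : 8 * d ≤ k)
    (hkd : k ≤ d ^ 2) :
    (2 * k - d).choose k * (k / (16 * d) : ℝ) ≤
      ∑ m ∈ Ico k (2 * k - d + 1), ((2 * k - d).choose m : ℝ) := by
  -- The `L = ⌊k / 4d⌋` terms from `C(n, k)` on are each `≥ ρ^L C(n, k) ≥ C(n, k) / 2` (Bernoulli).
  set L := k / (4 * d)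
  have hL1 : 1 ≤ L := (Nat.le_div_iff_mul_le (by omega)).2 (by omega)
  have hLk : L * (4 * d) ≤ k := Nat.div_mul_le_self k (4 * d)
  have hkL : k < 4 * d * (L + 1) := Nat.lt_mul_div_succ k (by omega)
  have hL4 : 4 * L ≤ k := by nlinarith
  refine le_trans (mul_le_mul_of_nonneg_left ?_ (by positivity))
    (choose_mul_pow_le_sum_Ico_choose (n := 2 * k - d) (k := k) (L := L) (by omega) (by omega))
  have hnum : ((2 * k - d - k - L : ℕ) : ℝ) = k - d - L := by
    rw [show 2 * k - d - k - L = k - (d + L) by omega, Nat.cast_sub (by omega)]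
    push_cast; ring
  rw [hnum]
  have hL1' : (1 : ℝ) ≤ L := by exact_mod_cast hL1
  have hLk' : (L : ℝ) * (4 * d) ≤ k := by exact_mod_cast hLk
  have hkL' : (k : ℝ) < 4 * d * (L + 1) := by exact_mod_cast hkL
  have hkd' : (k : ℝ) ≤ d ^ 2 := by exact_mod_cast hkd
  set ρ : ℝ := (k - d - L) / (k + L)
  have hρ0 : 0 ≤ ρ := div_nonneg (by linarith) (by positivity)
  have hL2 : 16 * (L : ℝ) ^ 2 ≤ k := by nlinarith
  have hdefect : (L : ℝ) * (1 - ρ) ≤ 1 / 2 := by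
    have : 1 - ρ = (d + 2 * L) / (k + L) := by simp only [ρ]; field_simp; ring
    rw [this, mul_div_assoc', div_le_iff₀ (by positivity)]
    nlinarith
  have hbernoulli : 1 + L * (ρ - 1) ≤ ρ ^ L := by
    simpa using one_add_mul_le_pow (a := ρ - 1) (by linarith) L
  have hhalf : 1 / 2 ≤ ρ ^ L := by linarith
  calc (k : ℝ) / (16 * d) ≤ L * (1 / 2) := by rw [div_le_iff₀ (by positivity)]; nlinarith
    _ ≤ L * ρ ^ L := by gcongr

lemma abs_log_upperTail_sub_le {k d : ℕ} (hd : 0 < d) (hdk : 8 * d ≤ k) (hcube : d ^ 3 ≤ k ^ 2)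
    (hkd : k ≤ d ^ 2) :
    0 < upperTail (2 * k - d) k ∧
      |log (upperTail (2 * k - d) k) - (log k / 2 - log d - d ^ 2 / (4 * k))| ≤ 10 := by
  have hup := sum_Ico_choose_two_mul_sub_le hd (by omega : d ≤ k)
  have hlow := choose_mul_le_sum_Ico_choose_two_mul_sub hd hdk hkd
  set b := k - d
  have hn : 2 * k - d = k + b := by omega
  rw [hn] at hup hlow ⊢
  set C : ℝ := ((k + b).choose k : ℝ)
  set S := ∑ m ∈ Ico k (k + b + 1), ((k + b).choose m : ℝ)
  have hC : 0 < C := Nat.cast_pos.2 (Nat.choose_pos (Nat.le_add_right k b))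
  have hd' : (0 : ℝ) < d := by exact_mod_cast hd
  have hk' : (0 : ℝ) < k := by exact_mod_cast (by omega : 0 < k)
  have hb' : (b : ℝ) = k - d := by rw [Nat.cast_sub (by omega)]
  have hdk' : 8 * (d : ℝ) ≤ k := by exact_mod_cast hdk
  have hcube' : (d : ℝ) ^ 3 ≤ k ^ 2 := by exact_mod_cast hcube
  have hratio_low : k / (16 * d) ≤ S / C := by rw [le_div_iff₀ hC]; linarith
  have hratio_up : S / C ≤ k / d := by rw [div_le_iff₀ hC]; linarith
  have hratio : 0 < S / C := lt_of_lt_of_le (by positivity) hratio_low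
  have hsplit : upperTail (k + b) k = C / 2 ^ (k + b) * (S / C) := by
    change S / _ = _
    field_simp
  have hcentral := abs_log_add_choose_div_two_pow_sub_le (a := k) (b := b) (by omega) (by omega)
    (by rw [hb', sub_sub_cancel, abs_of_pos hd']; linarith)
  have hN : (k : ℝ) + b = 2 * k - d := by rw [hb']; ring
  rw [hN, hb', sub_sub_cancel, abs_of_pos hd'] at hcentral
  have hkd' : (0 : ℝ) < k - d := by linarith
  have hN' : (0 : ℝ) < 2 * k - d := by linarith
  have herror : 2 * (d : ℝ) ^ 3 / (2 * k - d) ^ 2 ≤ 2 := by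
    rw [div_le_iff₀ (by positivity)]; nlinarith
  have hprefactor : log ((2 * k - d) / (2 * k * (k - d))) =
      log ((2 * k - d) / (2 * (k - d))) - log k := by
    rw [← log_div (by positivity) hk'.ne']
    congr 1; field_simp
  have hprefactor_nonneg : 0 ≤ log ((2 * k - d) / (2 * (k - d))) :=
    log_nonneg (by rw [le_div_iff₀ (by positivity)]; linarith)
  have hprefactor_le : log ((2 * k - d) / (2 * (k - d))) ≤ 1 / 2 := by
    refine (log_le_sub_one_of_pos (by positivity)).trans ?_
    rw [sub_le_iff_le_add, div_le_iff₀ (by positivity)]; linarith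
  have hquadratic : d ^ 2 / (2 * (2 * k - d)) - d ^ 2 / (4 * k) =
      (d : ℝ) ^ 3 / (4 * k * (2 * k - d)) := by
    field_simp; ring
  have hquadratic_le : (d : ℝ) ^ 3 / (4 * k * (2 * k - d)) ≤ 1 / 4 := by
    rw [div_le_iff₀ (by positivity)]; nlinarith
  have hquadratic_nonneg : 0 ≤ (d : ℝ) ^ 3 / (4 * k * (2 * k - d)) := by positivity
  have hlog16 : log 16 < 3 := by
    rw [show (16 : ℝ) = 2 ^ 4 by norm_num, log_pow]; push_cast; linarith [log_two_lt_d9]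
  have hratio_log_low : log k - log 16 - log d ≤ log (S / C) := by
    have h : log (k / (16 * d)) = log k - log 16 - log d := by
      rw [log_div hk'.ne' (by positivity), log_mul (by norm_num) hd'.ne']; ring
    exact h ▸ log_le_log (by positivity) hratio_low
  have hratio_log_up : log (S / C) ≤ log k - log d := by
    rw [← log_div hk'.ne' hd'.ne']
    exact log_le_log hratio hratio_up
  rw [hsplit, log_mul (by positivity) hratio.ne']
  rw [hprefactor, abs_le] at hcentral
  refine ⟨by positivity, abs_le.2 ⟨?_, ?_⟩⟩ <;> linarith

lemma eventually_const_mul_log_pow_le (C : ℝ) (n : ℕ) : ∀ᶠ x : ℝ in atTop, C * log x ^ n ≤ x := by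
  filter_upwards [((isLittleO_pow_log_id_atTop (n := n)).const_mul_left C).bound one_pos,
    eventually_ge_atTop 0] with x hx hx0
  simpa [abs_of_nonneg hx0] using (le_abs_self _).trans hx

lemma abs_log_sub_log_rpow_div_sqrt_log_le {c x d : ℝ} (hc : 0 < c) (hq : 2 ≤ √(c * x * log x))
    (hqx : √(c * x * log x) + 1 ≤ x) (hd : √(c * x * log x) ≤ d) (hd' : d ≤ √(c * x * log x) + 2) :
    |(log x / 2 - log d - d ^ 2 / (4 * x)) - log (x ^ (-(c / 4)) / √(log x))| ≤
      |log c| / 2 + 2 := by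
  set q := √(c * x * log x)
  have hx : 0 < x := by linarith
  have hlogx : 0 < log x := by
    have : 0 < c * x * log x := sqrt_pos.1 (by linarith)
    exact pos_of_mul_pos_right this (by positivity)
  have hq2 : q ^ 2 = c * x * log x := sq_sqrt (by positivity)
  have hlogq : log q = (log c + log x + log (log x)) / 2 := by
    rw [log_sqrt (by positivity), log_mul (by positivity) hlogx.ne', log_mul hc.ne' hx.ne']
  have htarget : log (x ^ (-(c / 4)) / √(log x)) = -(c / 4) * log x - log (log x) / 2 := by
    rw [log_div (by positivity) (by positivity), log_rpow hx, log_sqrt hlogx.le]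
  have hlogd : 0 ≤ log d - log q ∧ log d - log q ≤ 1 := by
    constructor
    · linarith [log_le_log (by linarith) hd]
    · have : log d ≤ log 2 + log q := by
        rw [← log_mul two_ne_zero (by positivity)]; exact log_le_log (by linarith) (by linarith)
      linarith [log_two_lt_d9]
  have hsq : 0 ≤ (d ^ 2 - q ^ 2) / (4 * x) ∧ (d ^ 2 - q ^ 2) / (4 * x) ≤ 1 := by
    constructor
    · exact div_nonneg (by nlinarith) (by positivity)
    · rw [div_le_one (by positivity)]; nlinarith
  have hsplit : (log x / 2 - log d - d ^ 2 / (4 * x)) - (-(c / 4) * log x - log (log x) / 2) =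
      -log c / 2 - (log d - log q) - (d ^ 2 - q ^ 2) / (4 * x) := by
    rw [hlogq, sub_div, hq2]; field_simp; ring
  rw [htarget, hsplit]
  have := neg_abs_le (log c)
  have := le_abs_self (log c)
  rw [abs_le]; constructor <;> linarith

lemma exp_neg_mul_le_and_le_exp_mul {x y K : ℝ} (hx : 0 < x) (hy : 0 < y)
    (h : |log x - log y| ≤ K) : exp (-K) * y ≤ x ∧ x ≤ exp K * y := by
  rw [abs_le] at h
  constructor
  · calc exp (-K) * y = exp (-K + log y) := by rw [exp_add, exp_log hy]
      _ ≤ exp (log x) := exp_le_exp.2 (by linarith)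
      _ = x := exp_log hx
  · calc x = exp (log x) := (exp_log hx).symm
      _ ≤ exp (K + log y) := exp_le_exp.2 (by linarith)
      _ = exp K * y := by rw [exp_add, exp_log hy]

lemma eventually_sqrt_mul_log_bounds {c : ℝ} (hc : 0 < c) : ∀ᶠ k : ℕ in atTop,
    (k : ℝ) ≤ √(c * k * log k) ^ 2 ∧ 2 ≤ √(c * k * log k) ∧ 16 * √(c * k * log k) ≤ k ∧
      8 * √(c * k * log k) ^ 3 ≤ k ^ 2 := by
  have hcast := tendsto_natCast_atTop_atTop (R := ℝ)
  filter_upwards [(tendsto_log_atTop.comp hcast).eventually_ge_atTop (1 / c),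
    eventually_ge_atTop 4, hcast.eventually (eventually_const_mul_log_pow_le (256 * c) 1),
    hcast.eventually (eventually_const_mul_log_pow_le (64 * c ^ 3) 3)] with k hlog hk4 hlog1 hlog3
  simp only [Function.comp_apply, pow_one] at hlog hlog1 hlog3
  set q := √(c * k * log k)
  have hclog : 1 ≤ c * log k := by rwa [div_le_iff₀' hc] at hlog
  have hq2 : q ^ 2 = c * k * log k := sq_sqrt (by nlinarith)
  have hq0 : 0 ≤ q := sqrt_nonneg _
  have hkq : (k : ℝ) ≤ q ^ 2 := by rw [hq2]; nlinarith
  refine ⟨hkq, by nlinarith, ?_, ?_⟩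
  · refine (pow_le_pow_iff_left₀ (by positivity) (by positivity) two_ne_zero).1 ?_
    rw [mul_pow, hq2]; nlinarith
  · refine (pow_le_pow_iff_left₀ (by positivity) (by positivity) two_ne_zero).1 ?_
    calc (8 * q ^ 3) ^ 2 = 64 * c ^ 3 * log k ^ 3 * (k : ℝ) ^ 3 := by
          rw [show (8 * q ^ 3) ^ 2 = 64 * (q ^ 2) ^ 3 by ring, hq2]; ring
      _ ≤ (k : ℝ) * k ^ 3 := by gcongr
      _ = ((k : ℝ) ^ 2) ^ 2 := by ring

lemma eventually_upperTail_bounds {c : ℝ} (hc : 0 < c) : ∀ᶠ k : ℕ in atTop,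
    ⌈√(c * k * log k)⌉₊ < k ∧
      exp (-(12 + |log c| / 2)) * ((k : ℝ) ^ (-(c / 4)) / √(log k)) ≤
        upperTail (2 * k - (⌈√(c * k * log k)⌉₊ + 1)) k ∧
      upperTail (2 * k - (⌈√(c * k * log k)⌉₊ + 1)) k ≤
        exp (12 + |log c| / 2) * ((k : ℝ) ^ (-(c / 4)) / √(log k)) := by
  filter_upwards [eventually_sqrt_mul_log_bounds hc] with k ⟨hkq, hq, h16, hcube⟩
  set q := √(c * k * log k)
  set d := ⌈q⌉₊ + 1
  have hq0 : 0 ≤ q := by linarith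
  have hqd : q ≤ d := by push_cast [d]; linarith [Nat.le_ceil q]
  have hdq : (d : ℝ) ≤ q + 2 := by push_cast [d]; linarith [Nat.ceil_lt_add_one hq0]
  have h8d : 8 * d ≤ k := by exact_mod_cast (show (8 * d : ℝ) ≤ k by linarith)
  have hd3 : d ^ 3 ≤ k ^ 2 := by
    have : (d : ℝ) ^ 3 ≤ (2 * q) ^ 3 := pow_le_pow_left₀ (by positivity) (by linarith) 3
    exact_mod_cast (show (d : ℝ) ^ 3 ≤ k ^ 2 by linarith [show (2 * q) ^ 3 = 8 * q ^ 3 by ring])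
  have hkd : k ≤ d ^ 2 := by
    have : q ^ 2 ≤ (d : ℝ) ^ 2 := pow_le_pow_left₀ hq0 hqd 2
    exact_mod_cast hkq.trans this
  obtain ⟨hpos, hmain⟩ := abs_log_upperTail_sub_le (by omega) h8d hd3 hkd
  have hexponent := abs_log_sub_log_rpow_div_sqrt_log_le hc hq (by linarith) hqd hdq
  have hlogk : 0 < log k := log_pos (by norm_cast; omega)
  refine ⟨by omega, exp_neg_mul_le_and_le_exp_mul hpos
    (div_pos (rpow_pos_of_pos (by norm_cast; omega) _) (sqrt_pos.2 hlogk)) ?_⟩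
  calc _ ≤ |log (upperTail (2 * k - d) k) - (log k / 2 - log d - d ^ 2 / (4 * k))| +
        |(log k / 2 - log d - d ^ 2 / (4 * k)) - log ((k : ℝ) ^ (-(c / 4)) / √(log k))| :=
        abs_sub_le _ _ _
    _ ≤ 12 + |log c| / 2 := by linarith

/-- Moderate deviations for the binomial: with `r = k − ⌈√(c·k·log k)⌉` and
`p_k = Pr(Binomial(r+k−1, 1/2) ≤ k−1) = 2^{−(r+k−1)}·Σ_{m=0}^{k−1} C(r+k−1, m)`,
one has `1 − p_k = Θ(k^{−c/4}/√(log k))` as `k → ∞`. -/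
theorem binomial_tail_theta (c : ℝ) (hc : 0 < c) :
    ∃ (A B : ℝ) (k₀ : ℕ), 0 < A ∧ A ≤ B ∧ ∀ k : ℕ, k₀ ≤ k →
      let r : ℕ := k - ⌈Real.sqrt (c * k * Real.log k)⌉₊
      let p : ℝ := (∑ m ∈ Finset.range k, (Nat.choose (r + k - 1) m : ℝ)) / 2 ^ (r + k - 1)
      A * (k : ℝ) ^ (-(c / 4)) / Real.sqrt (Real.log k) ≤ 1 - p ∧
        1 - p ≤ B * (k : ℝ) ^ (-(c / 4)) / Real.sqrt (Real.log k) := by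
  obtain ⟨k₀, hk₀⟩ := eventually_atTop.1 (eventually_upperTail_bounds hc)
  have hK : 0 ≤ 12 + |log c| / 2 := by positivity
  refine ⟨_, _, k₀, exp_pos _, exp_le_exp.2 (neg_le_self hK), fun k hk ↦ ?_⟩
  obtain ⟨hlt, hlow, hup⟩ := hk₀ k hk
  intro r p
  have hp : 1 - p = upperTail (2 * k - (⌈√(c * k * log k)⌉₊ + 1)) k := by
    rw [show 2 * k - (⌈√(c * k * log k)⌉₊ + 1) = r + k - 1 by omega]
    exact one_sub_sum_range_choose_div_two_pow (by omega)
  rw [mul_div_assoc, mul_div_assoc, hp]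
  exact ⟨hlow, hup⟩
end

section
/- Let k ≥ 1 be an integer, let 0 < μ ≤ k, and let Z be a Poisson random variable with mean μ. Then μ − √μ ≤ E[min(Z, k)] ≤ μ. -/
open Real

lemma poisson_aux (μ : ℝ) :
    Summable (fun m : ℕ => (m : ℝ) * (μ ^ m / m.factorial)) ∧
    Summable (fun m : ℕ => (m : ℝ) ^ 2 * (μ ^ m / m.factorial)) ∧
    (∑' m : ℕ, (m : ℝ) * (μ ^ m / m.factorial)) = μ * Real.exp μ ∧
    (∑' m : ℕ, (m : ℝ) ^ 2 * (μ ^ m / m.factorial)) = (μ ^ 2 + μ) * Real.exp μ := by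
  have hp : Summable (fun m : ℕ => μ ^ m / m.factorial) := Real.summable_pow_div_factorial μ
  have hexp : (∑' m : ℕ, μ ^ m / (m.factorial : ℝ)) = Real.exp μ := by
    rw [Real.exp_eq_exp_ℝ, NormedSpace.exp_eq_tsum_div]
  have hshift1 : ∀ m : ℕ, ((m + 1 : ℕ) : ℝ) * (μ ^ (m + 1) / (m + 1).factorial)
      = μ * (μ ^ m / m.factorial) := by
    intro m
    have h1 : ((m.factorial : ℝ)) ≠ 0 := Nat.cast_ne_zero.2 m.factorial_ne_zero
    rw [Nat.factorial_succ]
    push_cast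
    field_simp
    ring
  have hf1 : Summable (fun m : ℕ => (m : ℝ) * (μ ^ m / m.factorial)) := by
    apply (summable_nat_add_iff 1).mp
    exact (hp.mul_left μ).congr fun m => (hshift1 m).symm
  have t1 : (∑' m : ℕ, (m : ℝ) * (μ ^ m / m.factorial)) = μ * Real.exp μ := by
    rw [Summable.tsum_eq_zero_add hf1]
    simp only [hshift1]
    rw [tsum_mul_left, hexp]
    simp
  have hshift2 : ∀ m : ℕ, ((m + 1 : ℕ) : ℝ) ^ 2 * (μ ^ (m + 1) / (m + 1).factorial)
      = μ * ((m : ℝ) * (μ ^ m / m.factorial)) + μ * (μ ^ m / m.factorial) := by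
    intro m
    have h1 : ((m.factorial : ℝ)) ≠ 0 := Nat.cast_ne_zero.2 m.factorial_ne_zero
    rw [Nat.factorial_succ]
    push_cast
    field_simp
    ring
  have hf2 : Summable (fun m : ℕ => (m : ℝ) ^ 2 * (μ ^ m / m.factorial)) := by
    apply (summable_nat_add_iff 1).mp
    exact (((hf1.mul_left μ).add (hp.mul_left μ))).congr fun m => (hshift2 m).symm
  have t2 : (∑' m : ℕ, (m : ℝ) ^ 2 * (μ ^ m / m.factorial)) = (μ ^ 2 + μ) * Real.exp μ := by
    rw [Summable.tsum_eq_zero_add hf2]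
    simp only [hshift2]
    rw [Summable.tsum_add (hf1.mul_left μ) (hp.mul_left μ), tsum_mul_left, tsum_mul_left, hexp, t1]
    ring
  exact ⟨hf1, hf2, t1, t2⟩

/-- If `Z` is Poisson with mean `μ`, `0 < μ ≤ k`, then `μ − √μ ≤ E[min(Z, k)] ≤ μ`,
where `E[min(Z, k)] = Σ_m min(m, k)·e^{−μ}·μ^m/m!`. -/
theorem poisson_truncated_mean_bounds (k : ℕ) (hk : 1 ≤ k) (μ : ℝ) (hμ : 0 < μ)
    (hμk : μ ≤ k) :
    μ - Real.sqrt μ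
        ≤ ∑' m : ℕ, (↑(min m k) : ℝ) * (Real.exp (-μ) * μ ^ m / m.factorial) ∧
      ∑' m : ℕ, (↑(min m k) : ℝ) * (Real.exp (-μ) * μ ^ m / m.factorial) ≤ μ := by
  obtain ⟨hf1, hf2, t1, t2⟩ := poisson_aux μ
  have hp : Summable (fun m : ℕ => μ ^ m / m.factorial) := Real.summable_pow_div_factorial μ
  have hexp : (∑' m : ℕ, μ ^ m / (m.factorial : ℝ)) = Real.exp μ := by
    rw [Real.exp_eq_exp_ℝ, NormedSpace.exp_eq_tsum_div]
  set A := Real.exp (-μ) with hA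
  have hApos : 0 < A := Real.exp_pos _
  have hAe : A * Real.exp μ = 1 := by
    rw [hA, ← Real.exp_add]; simp
  have hq : ∀ m : ℕ, A * μ ^ m / m.factorial = A * (μ ^ m / m.factorial) := by
    intro m; ring
  have hqnn : ∀ m : ℕ, 0 ≤ A * (μ ^ m / m.factorial) := by
    intro m
    positivity
  -- summability of the three weighted series with factor A
  have hSp : Summable (fun m : ℕ => A * (μ ^ m / m.factorial)) := hp.mul_left A
  have hS1 : Summable (fun m : ℕ => (m : ℝ) * (A * (μ ^ m / m.factorial))) := by
    exact (hf1.mul_left A).congr fun m => by ring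
  have hS2 : Summable (fun m : ℕ => (m : ℝ) ^ 2 * (A * (μ ^ m / m.factorial))) := by
    exact (hf2.mul_left A).congr fun m => by ring
  have T1 : (∑' m : ℕ, (m : ℝ) * (A * (μ ^ m / m.factorial))) = μ := by
    have : (fun m : ℕ => (m : ℝ) * (A * (μ ^ m / m.factorial)))
        = fun m : ℕ => A * ((m : ℝ) * (μ ^ m / m.factorial)) := by
      funext m; ring
    rw [this, tsum_mul_left, t1]
    rw [← mul_assoc, mul_comm A μ, mul_assoc, hAe, mul_one]
  have T0 : (∑' m : ℕ, A * (μ ^ m / m.factorial)) = 1 := by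
    rw [tsum_mul_left, hexp, hAe]
  have T2 : (∑' m : ℕ, (m : ℝ) ^ 2 * (A * (μ ^ m / m.factorial))) = μ ^ 2 + μ := by
    have : (fun m : ℕ => (m : ℝ) ^ 2 * (A * (μ ^ m / m.factorial)))
        = fun m : ℕ => A * ((m : ℝ) ^ 2 * (μ ^ m / m.factorial)) := by
      funext m; ring
    rw [this, tsum_mul_left, t2, ← mul_assoc, mul_comm A, mul_assoc, hAe, mul_one]
  -- the target series is summable
  have hmin_le : ∀ m : ℕ, (↑(min m k) : ℝ) * (A * μ ^ m / m.factorial)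
      ≤ (m : ℝ) * (A * (μ ^ m / m.factorial)) := by
    intro m
    rw [hq]
    apply mul_le_mul_of_nonneg_right _ (hqnn m)
    exact_mod_cast Nat.cast_le.2 (min_le_left m k)
  have hmin_nn : ∀ m : ℕ, 0 ≤ (↑(min m k) : ℝ) * (A * μ ^ m / m.factorial) := by
    intro m; rw [hq]; exact mul_nonneg (Nat.cast_nonneg _) (hqnn m)
  have hSmin : Summable (fun m : ℕ => (↑(min m k) : ℝ) * (A * μ ^ m / m.factorial)) :=
    Summable.of_nonneg_of_le hmin_nn hmin_le hS1
  constructor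
  · -- lower bound
    set s := Real.sqrt μ with hs
    have hspos : 0 < s := Real.sqrt_pos.2 hμ
    have hs2 : s ^ 2 = μ := Real.sq_sqrt hμ.le
    set c := 1 / (2 * s) with hc
    have hcpos : 0 < c := by positivity
    -- lower bounding function
    set L := fun m : ℕ => ((m : ℝ) - c * (((m : ℝ) - μ) ^ 2 + μ)) * (A * (μ ^ m / m.factorial))
      with hL
    have hLeq : L = fun m : ℕ =>
        (1 + 2 * μ * c) * ((m : ℝ) * (A * (μ ^ m / m.factorial)))
        - c * ((m : ℝ) ^ 2 * (A * (μ ^ m / m.factorial)))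
        - c * (μ ^ 2 + μ) * (A * (μ ^ m / m.factorial)) := by
      funext m; rw [hL]; ring
    have hSL : Summable L := by
      rw [hLeq]
      exact ((hS1.mul_left _).sub (hS2.mul_left c)).sub (hSp.mul_left _)
    have hTL : (∑' m, L m) = μ - s := by
      rw [hLeq]
      rw [Summable.tsum_sub ((hS1.mul_left _).sub (hS2.mul_left c)) (hSp.mul_left _),
        Summable.tsum_sub (hS1.mul_left _) (hS2.mul_left c),
        tsum_mul_left, tsum_mul_left, tsum_mul_left, T0, T1, T2]
      rw [hc]
      field_simp
      nlinarith [hs2]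
    have hptwise : ∀ m : ℕ, L m ≤ (↑(min m k) : ℝ) * (A * μ ^ m / m.factorial) := by
      intro m
      rw [hq, hL]
      apply mul_le_mul_of_nonneg_right _ (hqnn m)
      rcases le_or_gt m k with h | h
      · rw [min_eq_left h]
        nlinarith [sq_nonneg ((m : ℝ) - μ)]
      · rw [min_eq_right h.le]
        have hkm : μ ≤ (m : ℝ) := le_trans hμk (Nat.cast_le.2 h.le)
        have hkk : μ ≤ (k : ℝ) := hμk
        have key : (m : ℝ) - μ ≤ c * (((m : ℝ) - μ) ^ 2 + μ) := by
          rw [hc]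
          rw [div_mul_eq_mul_div, le_div_iff₀ (by positivity)]
          nlinarith [sq_nonneg ((m : ℝ) - μ - s), hs2]
        have : (m : ℝ) - c * (((m : ℝ) - μ) ^ 2 + μ) ≤ μ := by linarith
        linarith
    calc μ - s = ∑' m, L m := hTL.symm
      _ ≤ _ := Summable.tsum_le_tsum hptwise hSL hSmin
  · calc ∑' m : ℕ, (↑(min m k) : ℝ) * (A * μ ^ m / m.factorial)
        ≤ ∑' m : ℕ, (m : ℝ) * (A * (μ ^ m / m.factorial)) :=
          Summable.tsum_le_tsum hmin_le hSmin hS1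
      _ = μ := T1
end
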